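/- Let c, Λ > 0, R > 0, and let u : (0,R) → [0,∞) be nondecreasing with u(r) > 0 for every r ∈ (0,R), satisfying c·u(r)^{n/(n+1)} ≤ 2 u'(r) + Λ u(r) for almost every r ∈ (0,R) (where u' denotes the a.e.-defined derivative of the monotone function u). Then there exist α > 0 and r₁ ∈ (0,R], depending only on n, c, Λ, such that u(r) ≥ α r^{n+1} for all r ∈ (0, r₁). -/
import Mathlib


open Filter Set Topology MeasureTheory

/-- If `g` is monotone on `ℝ` with a.e. derivative at least `β` on `(a,b)`, then
`g c' - g a ≥ β (b - a)` for any `c' > b`. -/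
lemma mono_growth_aux {g : ℝ → ℝ} (hg : Monotone g) {β a b c' : ℝ} (hab : a < b)
    (hbc : b < c') (hβ : 0 ≤ β) (h : ∀ᵐ x, x ∈ Set.Ioo a b → β ≤ deriv g x) :
    β * (b - a) ≤ g c' - g a := by
  set μ := hg.stieltjesFunction.measure with hμ
  have key : ∀ᵐ x, x ∈ Set.Ioo a b → ENNReal.ofReal β ≤ μ.rnDeriv volume x := by
    filter_upwards [hg.ae_hasDerivAt, h, Measure.rnDeriv_lt_top μ volume]
      with x hd hx hlt hmem
    have hderiv : deriv g x = (μ.rnDeriv volume x).toReal := hd.deriv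
    have hβle : β ≤ (μ.rnDeriv volume x).toReal := hderiv ▸ hx hmem
    calc ENNReal.ofReal β ≤ ENNReal.ofReal (μ.rnDeriv volume x).toReal :=
          ENNReal.ofReal_le_ofReal hβle
      _ = μ.rnDeriv volume x := ENNReal.ofReal_toReal hlt.ne
  have h1 : ENNReal.ofReal (β * (b - a)) ≤ μ (Set.Ioc a b) := by
    have e1 : ENNReal.ofReal (β * (b - a)) = ∫⁻ _ in Set.Ioo a b, ENNReal.ofReal β := by
      rw [setLIntegral_const, Real.volume_Ioo, ← ENNReal.ofReal_mul hβ]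
    rw [e1]
    calc ∫⁻ _ in Set.Ioo a b, ENNReal.ofReal β
        ≤ ∫⁻ x in Set.Ioo a b, μ.rnDeriv volume x := by
          apply lintegral_mono_ae
          rw [ae_restrict_iff' measurableSet_Ioo]
          exact key
      _ ≤ μ (Set.Ioo a b) := Measure.setLIntegral_rnDeriv_le _
      _ ≤ μ (Set.Ioc a b) := measure_mono Set.Ioo_subset_Ioc_self
  rw [hμ, StieltjesFunction.measure_Ioc] at h1
  have h2 : β * (b - a) ≤ hg.stieltjesFunction b - hg.stieltjesFunction a := by
    have := (ENNReal.ofReal_le_ofReal_iff ?_).1 h1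
    · exact this
    · rw [sub_nonneg]; exact hg.stieltjesFunction.mono hab.le
  have h3 : hg.stieltjesFunction b ≤ g c' := by
    rw [hg.stieltjesFunction_eq]; exact hg.rightLim_le hbc
  have h4 : g a ≤ hg.stieltjesFunction a := by
    rw [hg.stieltjesFunction_eq]; exact hg.le_rightLim le_rfl
  linarith

theorem lower_volume_bound_ODE (n : ℕ) (hn : 1 ≤ n) (c Λ : ℝ) (hc : 0 < c) (hΛ : 0 < Λ) :
    ∃ α > (0:ℝ), ∃ r₁ > (0:ℝ), ∀ R > (0:ℝ), ∀ u : ℝ → ℝ,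
      MonotoneOn u (Set.Ioo 0 R) →
      (∀ r ∈ Set.Ioo (0:ℝ) R, 0 < u r) →
      (∀ᵐ r, r ∈ Set.Ioo (0:ℝ) R →
        c * u r ^ ((n : ℝ) / (n + 1)) ≤ 2 * deriv u r + Λ * u r) →
      ∀ r ∈ Set.Ioo (0:ℝ) (min r₁ R), α * r ^ (n + 1) ≤ u r := by
  set q : ℝ := ((n : ℝ) + 1)⁻¹ with hq
  have hn1 : (0:ℝ) < (n : ℝ) + 1 := by positivity
  have hq0 : 0 < q := by positivity
  set β : ℝ := c / (4 * ((n : ℝ) + 1)) with hβ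
  have hβ0 : 0 < β := by positivity
  set K : ℝ := (c / (2 * Λ)) ^ (n + 1) with hK
  have hK0 : 0 < K := by positivity
  refine ⟨min (β ^ (n + 1)) K, lt_min (by positivity) hK0, 1, one_pos, ?_⟩
  intro R hR u hm hpos hae r hr
  obtain ⟨hr0, hrm⟩ := hr
  have hr1 : r < 1 := lt_of_lt_of_le hrm (min_le_left _ _)
  have hrR : r < R := lt_of_lt_of_le hrm (min_le_right _ _)
  have hrmem : r ∈ Set.Ioo (0:ℝ) R := ⟨hr0, hrR⟩
  by_cases hKu : K ≤ u r
  · calc min (β ^ (n + 1)) K * r ^ (n + 1) ≤ K * 1 :=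
        mul_le_mul (min_le_right _ _) (pow_le_one₀ hr0.le hr1.le) (by positivity) hK0.le
      _ ≤ u r := by rw [mul_one]; exact hKu
  push_neg at hKu
  -- every point of (0, r] has `0 < u s < K`
  have hus : ∀ s ∈ Set.Ioc (0:ℝ) r, 0 < u s ∧ u s < K := by
    intro s hs
    have hsmem : s ∈ Set.Ioo (0:ℝ) R := ⟨hs.1, lt_of_le_of_lt hs.2 hrR⟩
    exact ⟨hpos s hsmem, lt_of_le_of_lt (hm hsmem hrmem hs.2) hKu⟩
  set v : ℝ → ℝ := fun s => u s ^ q with hv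
  set w : ℝ → ℝ := fun x => if x ≤ 0 then 0 else v (min x r) with hw
  have hminmem : ∀ x : ℝ, 0 < x → min x r ∈ Set.Ioc (0:ℝ) r :=
    fun x hx => ⟨lt_min hx hr0, min_le_right _ _⟩
  have hwmono : Monotone w := by
    intro x y hxy
    simp only [hw]
    by_cases hx : x ≤ 0
    · rw [if_pos hx]
      by_cases hy : y ≤ 0
      · rw [if_pos hy]
      · rw [if_neg hy]
        exact Real.rpow_nonneg (hus _ (hminmem y (not_le.1 hy))).1.le _
    · rw [if_neg hx, if_neg (by linarith [not_le.1 hx] : ¬ y ≤ 0)]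
      have h1 := hminmem x (not_le.1 hx)
      have h2 := hminmem y (lt_of_lt_of_le (not_le.1 hx) hxy)
      have : u (min x r) ≤ u (min y r) := by
        apply hm ⟨h1.1, lt_of_le_of_lt h1.2 hrR⟩ ⟨h2.1, lt_of_le_of_lt h2.2 hrR⟩
        exact min_le_min hxy le_rfl
      exact Real.rpow_le_rpow (hus _ h1).1.le this hq0.le
  have hweq : ∀ x ∈ Set.Ioc (0:ℝ) r, w x = v x := by
    intro x hx
    simp only [hw, if_neg (not_le.2 hx.1), min_eq_left hx.2]
  -- a.e. derivative bound for w on (0, r)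
  have hd : ∀ᵐ x, x ∈ Set.Ioo 0 r → β ≤ deriv w x := by
    filter_upwards [hae, hm.ae_differentiableWithinAt_of_mem] with x h1 h2 hx
    have hxR : x ∈ Set.Ioo (0:ℝ) R := ⟨hx.1, hx.2.trans hrR⟩
    have hux := hus x ⟨hx.1, hx.2.le⟩
    have hdiff : DifferentiableAt ℝ u x :=
      (h2 hxR).differentiableAt (isOpen_Ioo.mem_nhds hxR)
    -- derivative lower bound for u
    set e : ℝ := (n : ℝ) / ((n : ℝ) + 1) with he
    have hqe : q + e = 1 := by
      rw [hq, he]; field_simp; ring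
    have hsplit : u x = u x ^ q * u x ^ e := by
      rw [← Real.rpow_add hux.1, hqe, Real.rpow_one]
    have hKq : (u x) ^ q ≤ K ^ q :=
      Real.rpow_le_rpow hux.1.le hux.2.le hq0.le
    have hKqval : K ^ q = c / (2 * Λ) := by
      rw [hK, ← Real.rpow_natCast (c / (2 * Λ)) (n + 1), ← Real.rpow_mul (by positivity)]
      have : ((n + 1 : ℕ) : ℝ) * q = 1 := by
        rw [hq]; push_cast; field_simp
      rw [this, Real.rpow_one]
    have hΛu : Λ * u x ≤ (c / 2) * u x ^ e := by
      calc Λ * u x = Λ * (u x ^ q * u x ^ e) := by rw [← hsplit]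
        _ ≤ Λ * (K ^ q * u x ^ e) := by
            apply mul_le_mul_of_nonneg_left _ hΛ.le
            exact mul_le_mul_of_nonneg_right hKq (Real.rpow_nonneg hux.1.le _)
        _ = (c / 2) * u x ^ e := by rw [hKqval]; field_simp
    have hineq := h1 hxR
    have hupos : (0:ℝ) < u x ^ e := Real.rpow_pos_of_pos hux.1 _
    have hderivu : (c / 4) * u x ^ e ≤ deriv u x := by linarith
    -- derivative of w via v
    have hvd : HasDerivAt v (deriv u x * q * u x ^ (q - 1)) x :=
      (hdiff.hasDerivAt.rpow_const (Or.inl hux.1.ne'))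
    have hwv : deriv w x = deriv v x := by
      apply Filter.EventuallyEq.deriv_eq
      filter_upwards [isOpen_Ioo.mem_nhds hx] with y hy
      exact hweq y ⟨hy.1, hy.2.le⟩
    rw [hwv, hvd.deriv]
    have hfac : (0:ℝ) < q * u x ^ (q - 1) :=
      mul_pos hq0 (Real.rpow_pos_of_pos hux.1 _)
    calc β = (c / 4) * u x ^ e * (q * u x ^ (q - 1)) := by
          have h6 : u x ^ e * u x ^ (q - 1) = 1 := by
            rw [← Real.rpow_add hux.1]
            have : e + (q - 1) = 0 := by rw [← hqe]; ring
            rw [this, Real.rpow_zero]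
          rw [show (c / 4) * u x ^ e * (q * u x ^ (q - 1))
              = (c / 4) * q * (u x ^ e * u x ^ (q - 1)) from by ring, h6, mul_one, hβ, hq]
          field_simp
      _ ≤ deriv u x * (q * u x ^ (q - 1)) := by
          apply mul_le_mul_of_nonneg_right _ hfac.le
          exact hderivu
      _ = deriv u x * q * u x ^ (q - 1) := by ring
  -- main estimate: for 0 < ε < r' < r, β (r' - ε) ≤ v r
  have hkey : ∀ r' ∈ Set.Ioo (0:ℝ) r, ∀ ε ∈ Set.Ioo (0:ℝ) r', β * (r' - ε) ≤ v r := by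
    intro r' hr' ε hε
    have hgrow := mono_growth_aux hwmono (β := β) hε.2 hr'.2 hβ0.le ?_
    · have hwr : w r = v r := hweq r ⟨hr0, le_rfl⟩
      have hwε : 0 ≤ w ε := by
        rw [hweq ε ⟨hε.1, (hε.2.trans hr'.2).le⟩]
        exact Real.rpow_nonneg (hus ε ⟨hε.1, (hε.2.trans hr'.2).le⟩).1.le _
      linarith [hgrow, hwr ▸ hgrow]
    · filter_upwards [hd] with x hx hmem
      exact hx ⟨hε.1.trans hmem.1, hmem.2.trans hr'.2⟩
  have hβr : β * r ≤ v r := by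
    have step1 : ∀ r' ∈ Set.Ioo (0:ℝ) r, β * r' ≤ v r := by
      intro r' hr'
      have htend : Tendsto (fun ε : ℝ => β * (r' - ε)) (𝓝[>] 0) (𝓝 (β * r')) := by
        have : Tendsto (fun ε : ℝ => β * (r' - ε)) (𝓝 0) (𝓝 (β * (r' - 0))) :=
          (tendsto_const_nhds.sub tendsto_id).const_mul β
        rw [sub_zero] at this
        exact this.mono_left nhdsWithin_le_nhds
      refine le_of_tendsto htend ?_
      filter_upwards [Ioo_mem_nhdsGT_of_mem ⟨le_rfl, hr'.1⟩] with ε hε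
      exact hkey r' hr' ε hε
    have htend : Tendsto (fun r' : ℝ => β * r') (𝓝[<] r) (𝓝 (β * r)) :=
      ((continuous_const.mul continuous_id).tendsto r).mono_left nhdsWithin_le_nhds
    refine le_of_tendsto htend ?_
    filter_upwards [Ioo_mem_nhdsLT_of_mem ⟨hr0, le_rfl⟩] with r' hr'
    exact step1 r' hr'
  -- conclude
  have hvr : v r ^ (n + 1) = u r := by
    rw [hv]
    rw [← Real.rpow_natCast (u r ^ q) (n + 1), ← Real.rpow_mul (hus r ⟨hr0, le_rfl⟩).1.le]
    have : q * ((n + 1 : ℕ) : ℝ) = 1 := by rw [hq]; push_cast; field_simp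
    rw [this, Real.rpow_one]
  calc min (β ^ (n + 1)) K * r ^ (n + 1) ≤ β ^ (n + 1) * r ^ (n + 1) :=
        mul_le_mul_of_nonneg_right (min_le_left _ _) (by positivity)
    _ = (β * r) ^ (n + 1) := by rw [mul_pow]
    _ ≤ v r ^ (n + 1) := pow_le_pow_left₀ (by positivity) hβr _
    _ = u r := hvr
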